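/- Let T > 0, γ > 0, let A, B, D ∈ ℝ^{2×2}, C ∈ ℝ², Q ∈ ℝ^{2×2} symmetric positive semidefinite, R ∈ ℝ^{2×2} symmetric positive definite, φ ∈ ℝ^{2×2} symmetric, and L : [0,T] → ℝ² continuous. Write E := −BR⁻¹Bᵀ + γ⁻²DDᵀ. Suppose P : [0,T] → ℝ^{2×2} (symmetric-valued), Ψ : [0,T] → ℝ² and χ : [0,T] → ℝ are differentiable and satisfy: P'(t) + P(t)A + AᵀP(t) + P(t)E P(t) + Q = 0 with P(T) = φ; Ψ'(t) + AᵀΨ(t) + P(t)C + P(t)E Ψ(t) + L(t) = 0 with Ψ(T) = 0; and χ'(t) + Ψ(t)ᵀC + (1/2)Ψ(t)ᵀE Ψ(t) = 0 with χ(T) = 0. Define v(X,t) = (1/2)XᵀP(t)X + Ψ(t)ᵀX + χ(t), u*(X,t) = −R⁻¹Bᵀ(P(t)X + Ψ(t)), and w*(X,t) = γ⁻²Dᵀ(P(t)X + Ψ(t)). Then for every X ∈ ℝ² and t ∈ [0,T): (i) ∂ₜv(X,t) + (P(t)X + Ψ(t))ᵀ(AX + Bu*(X,t) + C + Dw*(X,t))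 + (1/2)XᵀQX + (1/2)u*(X,t)ᵀRu*(X,t) − (γ²/2)‖w*(X,t)‖² + L(t)ᵀX = 0; (ii) (u*(X,t), w*(X,t)) is a saddle point of the Hamiltonian H(u,w) = (P(t)X + Ψ(t))ᵀ(AX + Bu + C + Dw) + (1/2)XᵀQX + (1/2)uᵀRu − (γ²/2)‖w‖² + L(t)ᵀX, i.e. H(u*, w) ≤ H(u*, w*) ≤ H(u, w*) for all u, w ∈ ℝ²; and (iii) v(X,T) = (1/2)XᵀφX. -/

import Mathlib

/-!
Put `p = P(t)X + Ψ(t)`. For fixed `X` and `t` the Hamiltonian is a constant plus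
`q(u) = (Bᵀp)·u + ½ uᵀRu` minus `r(w) = -(Dᵀp)·w + ½ wᵀ(γ²I)w`. A linear-quadratic function
`b·u + ½ uᵀRu` with `R` symmetric is, by completing the square, its value at any `u₀` with
`R u₀ = -b` plus `½ (u - u₀)ᵀR(u - u₀)`, and that value is `½ b·u₀`. With `R ⪰ 0` this gives the
saddle property at `u* = -R⁻¹Bᵀp`, `w* = γ⁻²Dᵀp`, and the value
`H(u*, w*) = p·(AX + C) + ½ XᵀQX + L·X + ½ pᵀEp`. Differentiating `v` in `t` and substituting the
equations for `P`, `Ψ`, `χ` (using that `P(t)` and `E` are symmetric) yields exactly `-H(u*, w*)`.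
-/

open Matrix Set

namespace Matrix

variable {m n : Type*} [Fintype n]

theorem IsSymm.dotProduct_mulVec_comm {α : Type*} [CommSemiring α] {M : Matrix n n α}
    (hM : M.IsSymm) (x y : n → α) : x ⬝ᵥ M *ᵥ y = y ⬝ᵥ M *ᵥ x := by
  rw [← dotProduct_transpose_mulVec, hM.eq]

theorem IsSymm.mul_mul_transpose {α : Type*} [CommSemiring α] {M : Matrix n n α}
    (hM : M.IsSymm) (B : Matrix m n α) : (B * M * Bᵀ).IsSymm := by
  rw [IsSymm, transpose_mul, transpose_mul, transpose_transpose, hM.eq, Matrix.mul_assoc]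

variable [Fintype m]

theorem dotProduct_transpose_mul_mulVec {k α : Type*} [Fintype k] [CommSemiring α]
    (M : Matrix m n α) (N : Matrix m k α) (x : n → α) (y : k → α) :
    x ⬝ᵥ (Mᵀ * N) *ᵥ y = (M *ᵥ x) ⬝ᵥ N *ᵥ y := by
  rw [← mulVec_mulVec, dotProduct_transpose_mulVec, dotProduct_comm]

theorem hasDerivWithinAt_dotProduct_mulVec {M : ℝ → Matrix m n ℝ} {M' : Matrix m n ℝ}
    {s : Set ℝ} {t : ℝ} (hM : ∀ i j, HasDerivWithinAt (fun τ => M τ i j) (M' i j) s t)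
    (x : m → ℝ) (y : n → ℝ) :
    HasDerivWithinAt (fun τ => x ⬝ᵥ M τ *ᵥ y) (x ⬝ᵥ M' *ᵥ y) s t := by
  simp only [dotProduct, mulVec]
  exact .fun_sum fun i _ =>
    (HasDerivWithinAt.fun_sum fun j _ => (hM i j).mul_const (y j)).const_mul (x i)

end Matrix

section

variable {n : Type*} [Fintype n]

theorem HasDerivWithinAt.dotProduct_const {f : ℝ → n → ℝ} {f' : n → ℝ} {s : Set ℝ} {t : ℝ}
    (hf : HasDerivWithinAt f f' s t) (y : n → ℝ) :
    HasDerivWithinAt (fun τ => f τ ⬝ᵥ y) (f' ⬝ᵥ y) s t := by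
  simp only [dotProduct]
  exact .fun_sum fun i _ => (hasDerivWithinAt_pi.1 hf i).mul_const (y i)

noncomputable def linQuad (b : n → ℝ) (R : Matrix n n ℝ) (u : n → ℝ) : ℝ :=
  b ⬝ᵥ u + 1 / 2 * (u ⬝ᵥ R *ᵥ u)

section LinQuad

variable {b u₀ : n → ℝ} {R : Matrix n n ℝ}

theorem linQuad_of_mulVec_eq_neg (hu₀ : R *ᵥ u₀ = -b) : linQuad b R u₀ = 1 / 2 * (b ⬝ᵥ u₀) := by
  rw [linQuad, hu₀, dotProduct_neg, dotProduct_comm]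
  ring

theorem linQuad_eq_add_of_mulVec_eq_neg (hR : R.IsSymm) (hu₀ : R *ᵥ u₀ = -b) (u : n → ℝ) :
    linQuad b R u = linQuad b R u₀ + 1 / 2 * ((u - u₀) ⬝ᵥ R *ᵥ (u - u₀)) := by
  have hcross : u ⬝ᵥ R *ᵥ u₀ = -(b ⬝ᵥ u) := by rw [hu₀, dotProduct_neg, dotProduct_comm]
  have hdiag : u₀ ⬝ᵥ R *ᵥ u₀ = -(b ⬝ᵥ u₀) := by rw [hu₀, dotProduct_neg, dotProduct_comm]
  simp only [linQuad, mulVec_sub, sub_dotProduct, dotProduct_sub, hR.dotProduct_mulVec_comm u₀ u]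
  linarith

theorem linQuad_le_of_mulVec_eq_neg (hR : R.PosSemidef) (hu₀ : R *ᵥ u₀ = -b) (u : n → ℝ) :
    linQuad b R u₀ ≤ linQuad b R u := by
  have hsq : 0 ≤ (u - u₀) ⬝ᵥ R *ᵥ (u - u₀) := by
    simpa using hR.dotProduct_mulVec_nonneg (u - u₀)
  rw [linQuad_eq_add_of_mulVec_eq_neg (isHermitian_iff_isSymm.1 hR.isHermitian) hu₀ u]
  linarith

end LinQuad

theorem hamiltonian_eq_linQuad_sub_linQuad [DecidableEq n] (A B D Q R : Matrix n n ℝ)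
    (C L X p u w : n → ℝ) (γ : ℝ) :
    p ⬝ᵥ (A *ᵥ X + B *ᵥ u + C + D *ᵥ w) + 1 / 2 * (X ⬝ᵥ Q *ᵥ X) + 1 / 2 * (u ⬝ᵥ R *ᵥ u)
        - γ ^ 2 / 2 * (w ⬝ᵥ w) + L ⬝ᵥ X =
      p ⬝ᵥ (A *ᵥ X + C) + 1 / 2 * (X ⬝ᵥ Q *ᵥ X) + L ⬝ᵥ X
        + linQuad (Bᵀ *ᵥ p) R u - linQuad (-(Dᵀ *ᵥ p)) ((γ ^ 2) • 1) w := by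
  have hB : (Bᵀ *ᵥ p) ⬝ᵥ u = p ⬝ᵥ B *ᵥ u := by rw [dotProduct_comm, dotProduct_transpose_mulVec]
  have hD : (Dᵀ *ᵥ p) ⬝ᵥ w = p ⬝ᵥ D *ᵥ w := by rw [dotProduct_comm, dotProduct_transpose_mulVec]
  simp only [linQuad, hB, hD, dotProduct_add, neg_dotProduct, smul_mulVec, one_mulVec,
    dotProduct_smul, smul_eq_mul]
  ring

theorem dotProduct_feedback_add_dotProduct_feedback [DecidableEq n] (B D R : Matrix n n ℝ)
    (c : ℝ) (p : n → ℝ) :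
    (Bᵀ *ᵥ p) ⬝ᵥ -((R⁻¹ * Bᵀ) *ᵥ p) + (Dᵀ *ᵥ p) ⬝ᵥ (c • (Dᵀ *ᵥ p)) =
      p ⬝ᵥ (-(B * R⁻¹ * Bᵀ) + c • (D * Dᵀ)) *ᵥ p := by
  rw [add_mulVec, neg_mulVec, smul_mulVec, dotProduct_add, dotProduct_neg, dotProduct_neg,
    dotProduct_smul, dotProduct_smul, Matrix.mul_assoc, ← dotProduct_transpose_mul_mulVec Bᵀ,
    ← dotProduct_transpose_mul_mulVec Dᵀ, transpose_transpose, transpose_transpose]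

theorem hji_identity_of_riccati {A E Q P P' : Matrix n n ℝ} {C L Ψ Ψ' : n → ℝ} {χ' : ℝ}
    (hP : P.IsSymm) (hE : E.IsSymm)
    (hPeq : P' + P * A + Aᵀ * P + P * E * P + Q = 0)
    (hΨeq : Ψ' + Aᵀ *ᵥ Ψ + P *ᵥ C + (P * E) *ᵥ Ψ + L = 0)
    (hχeq : χ' + Ψ ⬝ᵥ C + 1 / 2 * (Ψ ⬝ᵥ E *ᵥ Ψ) = 0) (X : n → ℝ) :
    1 / 2 * (X ⬝ᵥ P' *ᵥ X) + Ψ' ⬝ᵥ X + χ' =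
      -((P *ᵥ X + Ψ) ⬝ᵥ (A *ᵥ X + C) + 1 / 2 * (X ⬝ᵥ Q *ᵥ X) + L ⬝ᵥ X
        + 1 / 2 * ((P *ᵥ X + Ψ) ⬝ᵥ E *ᵥ (P *ᵥ X + Ψ))) := by
  have hP' : P' = -(P * A + Aᵀ * P + P * E * P + Q) :=
    eq_neg_of_add_eq_zero_left (by rw [← hPeq]; abel)
  have hΨ' : Ψ' = -(Aᵀ *ᵥ Ψ + P *ᵥ C + (P * E) *ᵥ Ψ + L) :=
    eq_neg_of_add_eq_zero_left (by rw [← hΨeq]; abel)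
  have hPA : X ⬝ᵥ (P * A) *ᵥ X = (P *ᵥ X) ⬝ᵥ A *ᵥ X := by
    rw [← dotProduct_transpose_mul_mulVec, hP.eq]
  have hAP : X ⬝ᵥ (Aᵀ * P) *ᵥ X = (P *ᵥ X) ⬝ᵥ A *ᵥ X := by
    rw [dotProduct_transpose_mul_mulVec, dotProduct_comm]
  have hPEP : X ⬝ᵥ (P * E * P) *ᵥ X = (P *ᵥ X) ⬝ᵥ E *ᵥ (P *ᵥ X) := by
    rw [mulVec_mulVec, ← dotProduct_transpose_mul_mulVec, hP.eq, Matrix.mul_assoc]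
  have hAΨ : (Aᵀ *ᵥ Ψ) ⬝ᵥ X = Ψ ⬝ᵥ A *ᵥ X := by
    rw [dotProduct_comm, dotProduct_transpose_mulVec]
  have hPC : (P *ᵥ C) ⬝ᵥ X = (P *ᵥ X) ⬝ᵥ C := by
    rw [dotProduct_comm, hP.dotProduct_mulVec_comm, dotProduct_comm]
  have hPEΨ : ((P * E) *ᵥ Ψ) ⬝ᵥ X = (P *ᵥ X) ⬝ᵥ E *ᵥ Ψ := by
    rw [← mulVec_mulVec, dotProduct_comm, hP.dotProduct_mulVec_comm, dotProduct_comm]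
  have hEcross : Ψ ⬝ᵥ E *ᵥ (P *ᵥ X) = (P *ᵥ X) ⬝ᵥ E *ᵥ Ψ := hE.dotProduct_mulVec_comm _ _
  rw [hP', hΨ']
  simp only [neg_mulVec, add_mulVec, mulVec_add, dotProduct_add, add_dotProduct,
    dotProduct_neg, neg_dotProduct]
  linarith

end

theorem stmt_6_general
    (T : ℝ) (γ : ℝ) (hγ : 0 < γ)
    (A B D : Matrix (Fin 2) (Fin 2) ℝ) (C : Fin 2 → ℝ)
    (Q R φ : Matrix (Fin 2) (Fin 2) ℝ)
    (hR : R.PosDef)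
    (L : ℝ → Fin 2 → ℝ)
    (E : Matrix (Fin 2) (Fin 2) ℝ) (hE : E = -(B * R⁻¹ * Bᵀ) + (γ ^ 2)⁻¹ • (D * Dᵀ))
    (P P' : ℝ → Matrix (Fin 2) (Fin 2) ℝ)
    (Ψ Ψ' : ℝ → Fin 2 → ℝ) (χ χ' : ℝ → ℝ)
    (hPsymm : ∀ t ∈ Icc (0:ℝ) T, (P t).IsSymm)
    (hPdiff : ∀ t ∈ Icc (0:ℝ) T, ∀ i j,
      HasDerivWithinAt (fun s => P s i j) (P' t i j) (Icc 0 T) t)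
    (hΨdiff : ∀ t ∈ Icc (0:ℝ) T, HasDerivWithinAt Ψ (Ψ' t) (Icc 0 T) t)
    (hχdiff : ∀ t ∈ Icc (0:ℝ) T, HasDerivWithinAt χ (χ' t) (Icc 0 T) t)
    (hPeq : ∀ t ∈ Icc (0:ℝ) T,
      P' t + P t * A + Aᵀ * P t + P t * E * P t + Q = 0)
    (hPT : P T = φ)
    (hΨeq : ∀ t ∈ Icc (0:ℝ) T,
      Ψ' t + Aᵀ *ᵥ Ψ t + P t *ᵥ C + (P t * E) *ᵥ Ψ t + L t = 0)
    (hΨT : Ψ T = 0)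
    (hχeq : ∀ t ∈ Icc (0:ℝ) T,
      χ' t + Ψ t ⬝ᵥ C + (1 / 2) * (Ψ t ⬝ᵥ (E *ᵥ Ψ t)) = 0)
    (hχT : χ T = 0) :
    ∀ X : Fin 2 → ℝ, ∀ t ∈ Ico (0:ℝ) T,
      let v : (Fin 2 → ℝ) → ℝ → ℝ := fun Y s =>
        (1 / 2) * (Y ⬝ᵥ (P s *ᵥ Y)) + Ψ s ⬝ᵥ Y + χ s
      let H : (Fin 2 → ℝ) → (Fin 2 → ℝ) → ℝ := fun u w =>
        (P t *ᵥ X + Ψ t) ⬝ᵥ (A *ᵥ X + B *ᵥ u + C + D *ᵥ w)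
          + (1 / 2) * (X ⬝ᵥ (Q *ᵥ X)) + (1 / 2) * (u ⬝ᵥ (R *ᵥ u))
          - (γ ^ 2 / 2) * (w ⬝ᵥ w) + L t ⬝ᵥ X
      let ustar : Fin 2 → ℝ := -((R⁻¹ * Bᵀ) *ᵥ (P t *ᵥ X + Ψ t))
      let wstar : Fin 2 → ℝ := (γ ^ 2)⁻¹ • (Dᵀ *ᵥ (P t *ᵥ X + Ψ t))
      HasDerivWithinAt (fun s => v X s) (-(H ustar wstar)) (Icc 0 T) t ∧
        (∀ u w : Fin 2 → ℝ, H ustar w ≤ H ustar wstar ∧ H ustar wstar ≤ H u wstar) ∧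
        v X T = (1 / 2) * (X ⬝ᵥ (φ *ᵥ X)) := by
  intro X t ht v H ustar wstar
  have ht' : t ∈ Icc 0 T := Ico_subset_Icc_self ht
  have hu : R *ᵥ ustar = -(Bᵀ *ᵥ (P t *ᵥ X + Ψ t)) := by
    rw [mulVec_neg, mulVec_mulVec, ← Matrix.mul_assoc, mul_nonsing_inv _ hR.det_pos.ne'.isUnit,
      one_mul]
  have hw : ((γ ^ 2) • (1 : Matrix (Fin 2) (Fin 2) ℝ)) *ᵥ wstar =
      -(-(Dᵀ *ᵥ (P t *ᵥ X + Ψ t))) := by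
    rw [neg_neg, smul_mulVec, one_mulVec, smul_inv_smul₀ (by positivity)]
  have hE_symm : E.IsSymm := hE ▸ ((isHermitian_iff_isSymm.1 hR.isHermitian).inv.mul_mul_transpose
    B).neg.add ((isSymm_mul_transpose_self D).smul _)
  refine ⟨?_, fun u w => ⟨?_, ?_⟩, ?_⟩
  · refine ((((hasDerivWithinAt_dotProduct_mulVec (hPdiff t ht') X X).const_mul (1 / 2)).add
      ((hΨdiff t ht').dotProduct_const X)).add (hχdiff t ht')).congr_deriv ?_
    simp only [H, hamiltonian_eq_linQuad_sub_linQuad]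
    rw [hji_identity_of_riccati (hPsymm t ht') hE_symm (hPeq t ht') (hΨeq t ht') (hχeq t ht'),
      linQuad_of_mulVec_eq_neg hu, linQuad_of_mulVec_eq_neg hw, hE,
      ← dotProduct_feedback_add_dotProduct_feedback]
    simp only [neg_dotProduct]
    ring
  · simp only [H, hamiltonian_eq_linQuad_sub_linQuad]
    linarith [linQuad_le_of_mulVec_eq_neg (PosSemidef.one.smul (sq_nonneg γ)) hw w]
  · simp only [H, hamiltonian_eq_linQuad_sub_linQuad]
    linarith [linQuad_le_of_mulVec_eq_neg hR.posSemidef hu u]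
  · simp [v, hPT, hΨT, hχT]

theorem stmt_6
    (T : ℝ) (hT : 0 < T) (γ : ℝ) (hγ : 0 < γ)
    (A B D : Matrix (Fin 2) (Fin 2) ℝ) (C : Fin 2 → ℝ)
    (Q R φ : Matrix (Fin 2) (Fin 2) ℝ)
    (hQ : Q.PosSemidef) (hR : R.PosDef) (hφ : φ.IsSymm)
    (L : ℝ → Fin 2 → ℝ) (hL : ContinuousOn L (Icc 0 T))
    (E : Matrix (Fin 2) (Fin 2) ℝ) (hE : E = -(B * R⁻¹ * Bᵀ) + (γ ^ 2)⁻¹ • (D * Dᵀ))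
    (P P' : ℝ → Matrix (Fin 2) (Fin 2) ℝ)
    (Ψ Ψ' : ℝ → Fin 2 → ℝ) (χ χ' : ℝ → ℝ)
    (hPsymm : ∀ t ∈ Icc (0:ℝ) T, (P t).IsSymm)
    (hPdiff : ∀ t ∈ Icc (0:ℝ) T, ∀ i j,
      HasDerivWithinAt (fun s => P s i j) (P' t i j) (Icc 0 T) t)
    (hΨdiff : ∀ t ∈ Icc (0:ℝ) T, HasDerivWithinAt Ψ (Ψ' t) (Icc 0 T) t)
    (hχdiff : ∀ t ∈ Icc (0:ℝ) T, HasDerivWithinAt χ (χ' t) (Icc 0 T) t)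
    (hPeq : ∀ t ∈ Icc (0:ℝ) T,
      P' t + P t * A + Aᵀ * P t + P t * E * P t + Q = 0)
    (hPT : P T = φ)
    (hΨeq : ∀ t ∈ Icc (0:ℝ) T,
      Ψ' t + Aᵀ *ᵥ Ψ t + P t *ᵥ C + (P t * E) *ᵥ Ψ t + L t = 0)
    (hΨT : Ψ T = 0)
    (hχeq : ∀ t ∈ Icc (0:ℝ) T,
      χ' t + Ψ t ⬝ᵥ C + (1 / 2) * (Ψ t ⬝ᵥ (E *ᵥ Ψ t)) = 0)
    (hχT : χ T = 0) :
    ∀ X : Fin 2 → ℝ, ∀ t ∈ Ico (0:ℝ) T,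
      let v : (Fin 2 → ℝ) → ℝ → ℝ := fun Y s =>
        (1 / 2) * (Y ⬝ᵥ (P s *ᵥ Y)) + Ψ s ⬝ᵥ Y + χ s
      let H : (Fin 2 → ℝ) → (Fin 2 → ℝ) → ℝ := fun u w =>
        (P t *ᵥ X + Ψ t) ⬝ᵥ (A *ᵥ X + B *ᵥ u + C + D *ᵥ w)
          + (1 / 2) * (X ⬝ᵥ (Q *ᵥ X)) + (1 / 2) * (u ⬝ᵥ (R *ᵥ u))
          - (γ ^ 2 / 2) * (w ⬝ᵥ w) + L t ⬝ᵥ X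
      let ustar : Fin 2 → ℝ := -((R⁻¹ * Bᵀ) *ᵥ (P t *ᵥ X + Ψ t))
      let wstar : Fin 2 → ℝ := (γ ^ 2)⁻¹ • (Dᵀ *ᵥ (P t *ᵥ X + Ψ t))
      HasDerivWithinAt (fun s => v X s) (-(H ustar wstar)) (Icc 0 T) t ∧
        (∀ u w : Fin 2 → ℝ, H ustar w ≤ H ustar wstar ∧ H ustar wstar ≤ H u wstar) ∧
        v X T = (1 / 2) * (X ⬝ᵥ (φ *ᵥ X)) :=
  stmt_6_general T γ hγ A B D C Q R φ hR L E hE P P' Ψ Ψ' χ χ' hPsymm hPdiff hΨdiff hχdiff hPeq hPT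
    hΨeq hΨT hχeq hχT
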